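/- For every binary Λ-tree T and homogenized Λ,X-TVA A = (Q, ι, δ, F), there exists a complete structured DNNF C of width at most |Q| and depth O(height(T)), together with a mapping γ from pairs (node of T, state of Q) to gates of C, such that for every node n and state q and every valuation ν of the subtree rooted at n, the assignment α(ν) belongs to S(γ(n,q)) if and only if some run of A on that subtree under ν maps n to q. Moreover, C has size O(|T| · |A|). -/

import Mathlib

/-- Positions in binary trees (paths from the root; `false` = left, `true` = right). -/
abbrev BPos := List Bool

inductive GateType where
  | top | bot | var | times | cup
deriving DecidableEq

/-- A set circuit: a DAG of gates typed ⊤, ⊥, var, ×, ∪.  `wire g' g` means `g'` is an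
input of `g`. -/
structure SetCircuit (V G : Type) where
  gtype : G → GateType
  wire : G → G → Prop
  varLabel : G → Set V
  varLabel_inj : ∀ g g', gtype g = GateType.var → gtype g' = GateType.var →
      varLabel g = varLabel g' → g = g'
  source_no_input : ∀ g, (gtype g = GateType.top ∨ gtype g = GateType.bot ∨
      gtype g = GateType.var) → ∀ g', ¬ wire g' g
  const_no_output : ∀ g, (gtype g = GateType.top ∨ gtype g = GateType.bot) → ∀ g', ¬ wire g g'
  times_two : ∀ g, gtype g = GateType.times → ∃ g₁ g₂, g₁ ≠ g₂ ∧ wire g₁ g ∧ wire g₂ g ∧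
      ∀ g', wire g' g → g' = g₁ ∨ g' = g₂
  cup_one : ∀ g, gtype g = GateType.cup → ∃ g', wire g' g

/-- `Captures C g S` : the set `S` of variables belongs to the set `S(g)` captured by
gate `g`, following the inductive semantics of set circuits. -/
inductive Captures {V G : Type} (C : SetCircuit V G) : G → Set V → Prop
  | var {g} : C.gtype g = GateType.var → Captures C g (C.varLabel g)
  | top {g} : C.gtype g = GateType.top → Captures C g ∅
  | times {g g₁ g₂ S₁ S₂} : C.gtype g = GateType.times → C.wire g₁ g → C.wire g₂ g →
      g₁ ≠ g₂ → Captures C g₁ S₁ → Captures C g₂ S₂ → Captures C g (S₁ ∪ S₂)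
  | cup {g g' S} : C.gtype g = GateType.cup → C.wire g' g → Captures C g' S → Captures C g S

/-- `CupPath C g' g` : there is a wire-path from `g'` to `g` all of whose gates strictly
between `g'` and `g` are ∪-gates. -/
inductive CupPath {V G : Type} (C : SetCircuit V G) : G → G → Prop
  | single {g' g} : C.wire g' g → CupPath C g' g
  | cons {g' m g} : C.wire g' m → C.gtype m = GateType.cup → CupPath C m g → CupPath C g' g

/-- A v-tree: a binary tree whose leaves are labeled by sets of variables. -/
inductive VTree (V : Type) where
  | leaf (vars : Set V)
  | node (l r : VTree V)

/-- The subtree of a v-tree at a position (if any). -/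
def VTree.sub {V : Type} : VTree V → BPos → Option (VTree V)
  | t, [] => some t
  | VTree.leaf _, _ :: _ => none
  | VTree.node l r, b :: p => VTree.sub (if b then r else l) p

/-- Variables occurring in (the leaves of) a v-tree. -/
def VTree.vars {V : Type} : VTree V → Set V
  | VTree.leaf vs => vs
  | VTree.node l r => l.vars ∪ r.vars

/-- Variables occurring below a given position of a v-tree. -/
def VTree.varsAt {V : Type} (t : VTree V) (p : BPos) : Set V :=
  match t.sub p with
  | some s => s.vars
  | none => ∅

/-- A complete structured DNNF: a set circuit together with a v-tree and a structuring
function `σ` mapping each gate to a (valid) position of the v-tree (its box). -/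
structure StructuredDNNF (V G : Type) extends SetCircuit V G where
  vtree : VTree V
  σ : G → BPos
  σ_valid : ∀ g, (vtree.sub (σ g)).isSome
  var_leaf : ∀ g, gtype g = GateType.var →
      ∃ vs, vtree.sub (σ g) = some (VTree.leaf vs) ∧ varLabel g ⊆ vs
  var_nonempty : ∀ g, gtype g = GateType.var → (varLabel g).Nonempty
  wire_struct : ∀ g' g, wire g' g →
      σ g' = σ g ∨ (gtype g' = GateType.cup ∧ ∃ b, σ g' = σ g ++ [b])
  times_children : ∀ g, gtype g = GateType.times →
      (∃ g₁, wire g₁ g ∧ σ g₁ = σ g ++ [false]) ∧ (∃ g₂, wire g₂ g ∧ σ g₂ = σ g ++ [true])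
  leaves_disjoint : ∀ p₁ p₂ vs₁ vs₂, vtree.sub p₁ = some (VTree.leaf vs₁) →
      vtree.sub p₂ = some (VTree.leaf vs₂) → p₁ ≠ p₂ → Disjoint vs₁ vs₂

/-- A tree variable automaton over binary trees. -/
structure TVA (L X Q : Type) where
  init : L → Set X → Q → Prop
  trans : L → Q → Q → Q → Prop
  final : Q → Prop

/-- Binary labeled trees. -/
inductive BTree (L : Type) where
  | leaf (l : L)
  | node (l : L) (t₁ t₂ : BTree L)

/-- The subtree of a binary tree at a position. -/
def BTree.subt {L : Type} : BTree L → BPos → Option (BTree L)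
  | t, [] => some t
  | BTree.leaf _, _ :: _ => none
  | BTree.node _ t₁ t₂, b :: p => BTree.subt (if b then t₂ else t₁) p

def BTree.size {L : Type} : BTree L → ℕ
  | BTree.leaf _ => 1
  | BTree.node _ t₁ t₂ => t₁.size + t₂.size + 1

def BTree.height {L : Type} : BTree L → ℕ
  | BTree.leaf _ => 0
  | BTree.node _ t₁ t₂ => max t₁.height t₂.height + 1

/-- `ReachAbs A ν t p q` : there is a run of `A` on the subtree `t` (sitting at absolute
position `p`) under the valuation `ν` (read at absolute leaf positions) mapping the
root of `t` to state `q`. -/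
inductive ReachAbs {L X Q : Type} (A : TVA L X Q) (ν : BPos → Set X) :
    BTree L → BPos → Q → Prop
  | leaf {l p q} : A.init l (ν p) q → ReachAbs A ν (BTree.leaf l) p q
  | node {l t₁ t₂ p q₁ q₂ q} : ReachAbs A ν t₁ (p ++ [false]) q₁ →
      ReachAbs A ν t₂ (p ++ [true]) q₂ → A.trans l q₁ q₂ q →
      ReachAbs A ν (BTree.node l t₁ t₂) p q

/-- `q` is a 0-state. -/
def ZeroState {L X Q : Type} (A : TVA L X Q) (q : Q) : Prop :=
  ∃ t : BTree L, ReachAbs A (fun _ => (∅ : Set X)) t [] q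

/-- `q` is a 1-state. -/
def OneState {L X Q : Type} (A : TVA L X Q) (q : Q) : Prop :=
  ∃ (t : BTree L) (ν : BPos → Set X), ReachAbs A ν t [] q ∧
    ∃ (p : BPos) (l : L), t.subt p = some (BTree.leaf l) ∧ (ν p).Nonempty

/-- `A` is homogenized. -/
def Homogenized {L X Q : Type} (A : TVA L X Q) : Prop :=
  ∀ q : Q, (ZeroState A q ∨ OneState A q) ∧ ¬ (ZeroState A q ∧ OneState A q)

/-- The v-tree obtained from `T`: same shape as `T`, each leaf at position `p` labeled
by the set of singletons `⟨Z : p⟩`, i.e. `{(z, p) | z : X}`. -/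
def vtreeOf {L : Type} (X : Type) : BTree L → BPos → VTree (X × BPos)
  | BTree.leaf _, p => VTree.leaf {zq : X × BPos | zq.2 = p}
  | BTree.node _ t₁ t₂, p =>
      VTree.node (vtreeOf X t₁ (p ++ [false])) (vtreeOf X t₂ (p ++ [true]))

/-- The assignment `α(ν)` of the valuation `ν` restricted to the subtree of `T` rooted
at `p`: the singletons `⟨Z : n⟩` for leaves `n` below `p` with `Z ∈ ν n`. -/
def assignBelow {L X : Type} (T : BTree L) (p : BPos) (ν : BPos → Set X) :
    Set (X × BPos) :=
  {zq : X × BPos | p <+: zq.2 ∧ (∃ l : L, T.subt zq.2 = some (BTree.leaf l)) ∧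
    zq.1 ∈ ν zq.2}

/-- `WirePath C g g' n` : a directed path of `n` wires from `g` to `g'`. -/
inductive WirePath {V G : Type} (C : SetCircuit V G) : G → G → ℕ → Prop
  | refl {g} : WirePath C g g 0
  | step {g m g' n} : C.wire g m → WirePath C m g' n → WirePath C g g' (n + 1)

/-! The gate `γ(n, q)` is a ∪-gate when some run reaches the 1-state `q` at `n`, a ⊤-gate when
`q` is reached at `n` under the empty valuation, and a ⊥-gate otherwise. Homogenization makes
these cases exclusive and exhaustive for reachable states: a run ends in a 0-state exactly when
its assignment is empty. A ∪-gate at a leaf is fed by one var-gate `S ×ˢ {n}` per initial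
transition; at an inner node it is fed by a ×-gate when both children are in 1-states, and
directly by the child in a 1-state when the other child is in a 0-state, which contributes the
empty assignment. Correctness follows by induction on the subtree, the decomposition of `α(ν)`
at a ×-gate being unique because the two children carry disjoint sets of singletons.
The rank `3·|n|` (plus 1 on ×-gates and 2 on var-gates) strictly decreases along every wire,
which bounds the depth; the gates at a node are indexed by states, initial transitions and
transitions, which bounds the width and the size. -/

theorem Set.eq_and_eq_of_union_eq_union {α : Type*} {S₁ S₂ A₁ A₂ U₁ U₂ : Set α}
    (hU : Disjoint U₁ U₂) (hS₁ : S₁ ⊆ U₁) (hS₂ : S₂ ⊆ U₂) (hA₁ : A₁ ⊆ U₁) (hA₂ : A₂ ⊆ U₂)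
    (h : S₁ ∪ S₂ = A₁ ∪ A₂) : S₁ = A₁ ∧ S₂ = A₂ := by
  have split : ∀ {B₁ B₂ : Set α}, B₁ ⊆ U₁ → B₂ ⊆ U₂ →
      (B₁ ∪ B₂) ∩ U₁ = B₁ ∧ (B₁ ∪ B₂) ∩ U₂ = B₂ := fun h₁ h₂ =>
    ⟨by rw [Set.union_inter_distrib_right, Set.inter_eq_left.2 h₁,
        (hU.symm.mono_left h₂).inter_eq, Set.union_empty],
      by rw [Set.union_inter_distrib_right, Set.inter_eq_left.2 h₂,
        (hU.mono_left h₁).inter_eq, Set.empty_union]⟩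
  constructor
  · rw [← (split hS₁ hS₂).1, ← (split hA₁ hA₂).1, h]
  · rw [← (split hS₁ hS₂).2, ← (split hA₁ hA₂).2, h]

namespace BTree

variable {L : Type}

theorem subt_append (T : BTree L) (p r : BPos) :
    T.subt (p ++ r) = (T.subt p).bind (·.subt r) := by
  induction p generalizing T with
  | nil => simp [subt]
  | cons b p ih => cases T <;> simp [subt, ih]

theorem subt_append_false {T : BTree L} {p : BPos} {l : L} {t₁ t₂ : BTree L}
    (hp : T.subt p = some (node l t₁ t₂)) : T.subt (p ++ [false]) = some t₁ := by
  simp [subt_append, hp, subt]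

theorem subt_append_true {T : BTree L} {p : BPos} {l : L} {t₁ t₂ : BTree L}
    (hp : T.subt p = some (node l t₁ t₂)) : T.subt (p ++ [true]) = some t₂ := by
  simp [subt_append, hp, subt]

theorem length_le_height {T : BTree L} {p : BPos} (h : (T.subt p).isSome) :
    p.length ≤ T.height := by
  induction p generalizing T with
  | nil => simp
  | cons b p ih =>
    cases T with
    | leaf => simp [subt] at h
    | node l t₁ t₂ =>
      have := ih h
      cases b <;> simp only [List.length_cons, height] <;> grind

def positions : BTree L → Finset BPos
  | leaf _ => {[]}
  | node _ t₁ t₂ =>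
      insert [] (t₁.positions.map ⟨List.cons false, List.cons_injective⟩ ∪
        t₂.positions.map ⟨List.cons true, List.cons_injective⟩)

theorem mem_positions {T : BTree L} {p : BPos} : p ∈ T.positions ↔ (T.subt p).isSome := by
  induction T generalizing p with
  | leaf => cases p <;> simp [positions, subt]
  | node l t₁ t₂ ih₁ ih₂ =>
    rcases p with _ | ⟨_ | _, p⟩ <;> simp [positions, subt, ih₁, ih₂]

theorem card_positions (T : BTree L) : T.positions.card = T.size := by
  induction T with
  | leaf => rfl
  | node l t₁ t₂ ih₁ ih₂ =>
    rw [positions, Finset.card_insert_of_notMem (by simp), Finset.card_union_of_disjoint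
      (by simp [Finset.disjoint_left]), Finset.card_map, Finset.card_map, ih₁, ih₂, size]

end BTree

theorem vtreeOf_sub (X : Type) {L : Type} {t t' : BTree L} {p : BPos} (r : BPos)
    (h : t.subt p = some t') : (vtreeOf X t r).sub p = some (vtreeOf X t' (r ++ p)) := by
  induction p generalizing t r with
  | nil =>
    simp only [BTree.subt, Option.some.injEq] at h
    subst h
    cases t <;> simp [VTree.sub, vtreeOf]
  | cons b p ih =>
    cases t with
    | leaf => simp [BTree.subt] at h
    | node l t₁ t₂ =>
      cases b
      · simpa [vtreeOf, VTree.sub, BTree.subt] using ih (r ++ [false]) h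
      · simpa [vtreeOf, VTree.sub, BTree.subt] using ih (r ++ [true]) h

theorem vtreeOf_sub_eq_leaf (X : Type) {L : Type} {t : BTree L} {r p : BPos}
    {vs : Set (X × BPos)} (h : (vtreeOf X t r).sub p = some (VTree.leaf vs)) :
    vs = {z | z.2 = r ++ p} := by
  induction t generalizing r p with
  | leaf => cases p <;> simp_all [vtreeOf, VTree.sub]
  | node l t₁ t₂ ih₁ ih₂ =>
    rcases p with _ | ⟨_ | _, p⟩
    · simp [vtreeOf, VTree.sub] at h
    · simpa using ih₁ h
    · simpa using ih₂ h

def varsBelow (X : Type) (p : BPos) : Set (X × BPos) := {z | p <+: z.2}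

theorem disjoint_varsBelow_false_true (X : Type) (p : BPos) :
    Disjoint (varsBelow X (p ++ [false])) (varsBelow X (p ++ [true])) := by
  rw [Set.disjoint_left]
  rintro z ⟨r₁, h₁⟩ ⟨r₂, h₂⟩
  rw [← h₂] at h₁
  simp at h₁

section Runs

variable {L X Q : Type} {A : TVA L X Q} {T t : BTree L} {p : BPos} {q : Q}
  {ν : BPos → Set X}

theorem ReachAbs.congr {ν' : BPos → Set X} (h : ReachAbs A ν t p q)
    (hν : ∀ r l, t.subt r = some (BTree.leaf l) → ν' (p ++ r) = ν (p ++ r)) :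
    ReachAbs A ν' t p q := by
  induction h with
  | @leaf l p q hi =>
    have hνp : ν' p = ν p := by simpa using hν [] l rfl
    exact .leaf (hνp ▸ hi)
  | node _ _ htr ih₁ ih₂ =>
    refine .node (ih₁ fun r l hr => ?_) (ih₂ fun r l hr => ?_) htr
    · simpa using hν (false :: r) l hr
    · simpa using hν (true :: r) l hr

theorem ReachAbs.shift {s : BPos} (h : ReachAbs A ν t (s ++ p) q) :
    ReachAbs A (fun r => ν (s ++ r)) t p q := by
  induction t generalizing p q with
  | leaf => cases h with | leaf h => exact .leaf h
  | node l t₁ t₂ ih₁ ih₂ =>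
    cases h with
    | node h₁ h₂ htr => exact .node (ih₁ (by simpa using h₁)) (ih₂ (by simpa using h₂)) htr

theorem ReachAbs.toRoot (h : ReachAbs A ν t p q) : ReachAbs A (fun r => ν (p ++ r)) t [] q :=
  ReachAbs.shift (by simpa using h)

theorem ReachAbs.zeroState (h : ReachAbs A (fun _ => ∅) t p q) : ZeroState A q :=
  ⟨t, h.toRoot⟩

theorem assignBelow_subset_varsBelow : assignBelow T p ν ⊆ varsBelow X p := fun _ h => h.1

theorem mem_assignBelow_append (hp : T.subt p = some t) {z : X} {r : BPos} :
    (z, p ++ r) ∈ assignBelow T p ν ↔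
      (∃ l, t.subt r = some (BTree.leaf l)) ∧ z ∈ ν (p ++ r) := by
  simp [assignBelow, BTree.subt_append, hp]

theorem assignBelow_leaf {l : L} (hp : T.subt p = some (BTree.leaf l)) :
    assignBelow T p ν = ν p ×ˢ {p} := by
  ext ⟨z, n⟩
  constructor
  · rintro ⟨⟨r, rfl⟩, ⟨l', hl'⟩, hz⟩
    cases r with
    | nil => simpa using hz
    | cons => simp [BTree.subt_append, hp, BTree.subt] at hl'
  · rintro ⟨hz, hn⟩
    obtain rfl : n = p := hn
    exact ⟨List.prefix_refl _, ⟨l, hp⟩, hz⟩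

theorem assignBelow_node {l : L} {t₁ t₂ : BTree L} (hp : T.subt p = some (BTree.node l t₁ t₂)) :
    assignBelow T p ν = assignBelow T (p ++ [false]) ν ∪ assignBelow T (p ++ [true]) ν := by
  ext ⟨z, n⟩
  constructor
  · rintro ⟨⟨r, rfl⟩, hleaf, hz⟩
    rcases r with _ | ⟨_ | _, r⟩
    · simp [hp] at hleaf
    · exact Or.inl ⟨⟨r, by simp⟩, hleaf, hz⟩
    · exact Or.inr ⟨⟨r, by simp⟩, hleaf, hz⟩
  · rintro (⟨hpre, hleaf, hz⟩ | ⟨hpre, hleaf, hz⟩)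
    · exact ⟨(List.prefix_append p _).trans hpre, hleaf, hz⟩
    · exact ⟨(List.prefix_append p _).trans hpre, hleaf, hz⟩

theorem reachAbs_iff_of_assignBelow_eq_empty (hp : T.subt p = some t)
    (he : assignBelow T p ν = ∅) : ReachAbs A ν t p q ↔ ReachAbs A (fun _ => ∅) t p q := by
  have hν : ∀ r l, t.subt r = some (BTree.leaf l) → ν (p ++ r) = ∅ := fun r l hr =>
    Set.eq_empty_of_forall_notMem fun z hz =>
      he.subset ((mem_assignBelow_append hp).2 ⟨⟨l, hr⟩, hz⟩)
  exact ⟨fun h => h.congr fun r l hr => (hν r l hr).symm, fun h => h.congr hν⟩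

theorem ReachAbs.oneState (hp : T.subt p = some t) (h : ReachAbs A ν t p q)
    (hne : (assignBelow T p ν).Nonempty) : OneState A q := by
  obtain ⟨⟨z, _⟩, hz⟩ := hne
  obtain ⟨r, rfl⟩ := hz.1
  obtain ⟨⟨l, hl⟩, hz⟩ := (mem_assignBelow_append hp).1 hz
  exact ⟨t, _, h.toRoot, r, l, hl, z, hz⟩

theorem assignBelow_node_of_subset_false {l : L} {t₁ t₂ : BTree L}
    (hp : T.subt p = some (.node l t₁ t₂))
    (h : assignBelow T p ν ⊆ varsBelow X (p ++ [false])) :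
    assignBelow T (p ++ [true]) ν = ∅ ∧ assignBelow T p ν = assignBelow T (p ++ [false]) ν := by
  have he : assignBelow T (p ++ [true]) ν = ∅ := disjoint_self.1 <|
    (disjoint_varsBelow_false_true X p).symm.mono assignBelow_subset_varsBelow
      ((assignBelow_node hp ▸ Set.subset_union_right).trans h)
  exact ⟨he, by rw [assignBelow_node hp, he, Set.union_empty]⟩

theorem assignBelow_node_of_subset_true {l : L} {t₁ t₂ : BTree L}
    (hp : T.subt p = some (.node l t₁ t₂))
    (h : assignBelow T p ν ⊆ varsBelow X (p ++ [true])) :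
    assignBelow T (p ++ [false]) ν = ∅ ∧ assignBelow T p ν = assignBelow T (p ++ [true]) ν := by
  have he : assignBelow T (p ++ [false]) ν = ∅ := disjoint_self.1 <|
    (disjoint_varsBelow_false_true X p).mono assignBelow_subset_varsBelow
      ((assignBelow_node hp ▸ Set.subset_union_left).trans h)
  exact ⟨he, by rw [assignBelow_node hp, he, Set.empty_union]⟩

end Runs

section Homogenized

variable {L X Q : Type} {A : TVA L X Q} {T t : BTree L} {p : BPos} {q : Q}
  {ν : BPos → Set X}

theorem Homogenized.oneState_iff_not_zeroState (hA : Homogenized A) (q : Q) :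
    OneState A q ↔ ¬ ZeroState A q :=
  ⟨fun h₁ h₀ => (hA q).2 ⟨h₀, h₁⟩, (hA q).1.resolve_left⟩

theorem Homogenized.assignBelow_eq_empty_iff (hA : Homogenized A) (hp : T.subt p = some t)
    (h : ReachAbs A ν t p q) : assignBelow T p ν = ∅ ↔ ZeroState A q := by
  refine ⟨fun he => ((reachAbs_iff_of_assignBelow_eq_empty hp he).1 h).zeroState,
    fun h₀ => ?_⟩
  by_contra hne
  exact (hA.oneState_iff_not_zeroState q).1
    (h.oneState hp (Set.nonempty_iff_ne_empty.2 hne)) h₀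

theorem Homogenized.assignBelow_nonempty_iff (hA : Homogenized A) (hp : T.subt p = some t)
    (h : ReachAbs A ν t p q) : (assignBelow T p ν).Nonempty ↔ OneState A q := by
  rw [Set.nonempty_iff_ne_empty, hA.oneState_iff_not_zeroState,
    ← hA.assignBelow_eq_empty_iff hp h]

theorem Homogenized.init_nonempty (hA : Homogenized A) {l : L}
    (hp : T.subt p = some (.leaf l)) (hi : A.init l (ν p) q) (hq : OneState A q) :
    (ν p).Nonempty := by
  have := (hA.assignBelow_nonempty_iff hp (.leaf hi)).2 hq
  rw [assignBelow_leaf hp] at this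
  exact (Set.prod_nonempty_iff.1 this).1

end Homogenized

section Circuits

variable {V G : Type} {C : SetCircuit V G} {g : G} {S : Set V}

theorem captures_iff_of_top (hg : C.gtype g = .top) : Captures C g S ↔ S = ∅ := by
  refine ⟨fun h => ?_, fun h => h ▸ .top hg⟩
  cases h <;> simp_all

theorem not_captures_of_bot (hg : C.gtype g = .bot) : ¬ Captures C g S := by
  intro h
  cases h <;> simp_all

theorem captures_iff_of_var (hg : C.gtype g = .var) : Captures C g S ↔ S = C.varLabel g := by
  refine ⟨fun h => ?_, fun h => h ▸ .var hg⟩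
  cases h <;> simp_all

theorem captures_iff_of_cup (hg : C.gtype g = .cup) :
    Captures C g S ↔ ∃ g', C.wire g' g ∧ Captures C g' S := by
  refine ⟨fun h => ?_, fun ⟨g', hw, h⟩ => .cup hg hw h⟩
  cases h with
  | cup _ hw h => exact ⟨_, hw, h⟩
  | _ => simp_all

theorem captures_iff_of_times (hg : C.gtype g = .times) :
    Captures C g S ↔ ∃ g₁ g₂ S₁ S₂, C.wire g₁ g ∧ C.wire g₂ g ∧ g₁ ≠ g₂ ∧
      Captures C g₁ S₁ ∧ Captures C g₂ S₂ ∧ S = S₁ ∪ S₂ := by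
  refine ⟨fun h => ?_, fun ⟨g₁, g₂, S₁, S₂, hw₁, hw₂, hne, h₁, h₂, hS⟩ =>
    hS ▸ .times hg hw₁ hw₂ hne h₁ h₂⟩
  cases h with
  | times _ hw₁ hw₂ hne h₁ h₂ => exact ⟨_, _, _, _, hw₁, hw₂, hne, h₁, h₂, rfl⟩
  | _ => simp_all

theorem Captures.subset_of_wire {U : G → Set V}
    (hvar : ∀ g, C.gtype g = .var → C.varLabel g ⊆ U g)
    (hwire : ∀ g' g, C.wire g' g → U g' ⊆ U g) (h : Captures C g S) : S ⊆ U g := by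
  induction h with
  | var hg => exact hvar _ hg
  | top => exact Set.empty_subset _
  | times _ hw₁ hw₂ _ _ _ ih₁ ih₂ =>
    exact Set.union_subset (ih₁.trans (hwire _ _ hw₁)) (ih₂.trans (hwire _ _ hw₂))
  | cup _ hw _ ih => exact ih.trans (hwire _ _ hw)

theorem WirePath.add_le {f : G → ℕ} (hf : ∀ g m, C.wire g m → f m < f g) {g g' : G} {n : ℕ}
    (h : WirePath C g g' n) : n + f g' ≤ f g := by
  induction h with
  | refl => simp
  | step hw _ ih => have := hf _ _ hw; omega

end Circuits

namespace AssignmentCircuit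

variable {L X Q : Type}

inductive Gate (X Q : Type) where
  | state (p : BPos) (q : Q)
  | var (p : BPos) (S : Set X)
  | times (p : BPos) (q₁ q₂ : Q)

def Gate.pos : Gate X Q → BPos
  | state p _ | var p _ | times p _ _ => p

section Construction

variable (A : TVA L X Q) (T : BTree L)

def ReachesOne (p : BPos) (q : Q) : Prop :=
  (∃ t ν, T.subt p = some t ∧ ReachAbs A ν t p q) ∧ OneState A q

def ReachesEmpty (p : BPos) (q : Q) : Prop :=
  ∃ t, T.subt p = some t ∧ ReachAbs A (fun _ => ∅) t p q

def IsGate : Gate X Q → Prop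
  | .state p _ => (T.subt p).isSome
  | .var p S => ∃ l, T.subt p = some (.leaf l) ∧ S.Nonempty ∧ ∃ q, A.init l S q
  | .times p q₁ q₂ => ∃ l t₁ t₂, T.subt p = some (.node l t₁ t₂) ∧
      ReachesOne A T (p ++ [false]) q₁ ∧ ReachesOne A T (p ++ [true]) q₂ ∧
      ∃ q, A.trans l q₁ q₂ q

inductive Feeds : Gate X Q → Gate X Q → Prop
  | var {p l S q} : T.subt p = some (.leaf l) → A.init l S q → ReachesOne A T p q →
      Feeds (.var p S) (.state p q)
  | times {p l t₁ t₂ q₁ q₂ q} : T.subt p = some (.node l t₁ t₂) → A.trans l q₁ q₂ q →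
      ReachesOne A T p q → Feeds (.times p q₁ q₂) (.state p q)
  | left {p l t₁ t₂ q₁ q₂ q} : T.subt p = some (.node l t₁ t₂) → A.trans l q₁ q₂ q →
      ReachesOne A T p q → ReachesOne A T (p ++ [false]) q₁ →
      ReachesEmpty A T (p ++ [true]) q₂ → Feeds (.state (p ++ [false]) q₁) (.state p q)
  | right {p l t₁ t₂ q₁ q₂ q} : T.subt p = some (.node l t₁ t₂) → A.trans l q₁ q₂ q →
      ReachesOne A T p q → ReachesEmpty A T (p ++ [false]) q₁ →
      ReachesOne A T (p ++ [true]) q₂ → Feeds (.state (p ++ [true]) q₂) (.state p q)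
  | timesLeft {p q₁ q₂} : ReachesOne A T (p ++ [false]) q₁ →
      Feeds (.state (p ++ [false]) q₁) (.times p q₁ q₂)
  | timesRight {p q₁ q₂} : ReachesOne A T (p ++ [true]) q₂ →
      Feeds (.state (p ++ [true]) q₂) (.times p q₁ q₂)

open Classical in
noncomputable def gateType : Gate X Q → GateType
  | .state p q =>
      if ReachesOne A T p q then .cup else if ReachesEmpty A T p q then .top else .bot
  | .var _ _ => .var
  | .times _ _ _ => .times

def label : Gate X Q → Set (X × BPos)
  | .var p S => S ×ˢ {p}
  | _ => ∅

abbrev ValidGate : Type := {g : Gate X Q | IsGate A T g}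

end Construction

variable {A : TVA L X Q} {T t : BTree L} {p : BPos} {q : Q} {ν : BPos → Set X}

theorem gateType_eq_var_iff {g : Gate X Q} : gateType A T g = .var ↔ ∃ p S, g = .var p S := by
  cases g <;> simp only [gateType, reduceCtorEq, exists_false, Gate.var.injEq] <;>
    first | split_ifs <;> simp | simp

theorem gateType_eq_times_iff {g : Gate X Q} :
    gateType A T g = .times ↔ ∃ p q₁ q₂, g = .times p q₁ q₂ := by
  cases g <;> simp only [gateType, reduceCtorEq, exists_false, Gate.times.injEq] <;>
    first | split_ifs <;> simp | simp

theorem gateType_eq_cup_iff {g : Gate X Q} :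
    gateType A T g = .cup ↔ ∃ p q, g = .state p q ∧ ReachesOne A T p q := by
  cases g <;> simp only [gateType, reduceCtorEq, Gate.state.injEq] <;>
    first | split_ifs <;> simp_all | simp

theorem gateType_state_of_reachesOne (h : ReachesOne A T p q) :
    gateType A T (.state p q) = .cup :=
  if_pos h

theorem Feeds.gateType_target {g' g : Gate X Q} (h : Feeds A T g' g) :
    gateType A T g = .cup ∨ gateType A T g = .times := by
  cases h <;> simp_all [gateType]

theorem Feeds.gateType_source {g' g : Gate X Q} (h : Feeds A T g' g) :
    gateType A T g' = .var ∨ gateType A T g' = .times ∨ gateType A T g' = .cup := by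
  cases h <;> simp_all [gateType]

theorem Feeds.pos_eq_or {g' g : Gate X Q} (h : Feeds A T g' g) :
    g'.pos = g.pos ∨ gateType A T g' = .cup ∧ ∃ b, g'.pos = g.pos ++ [b] := by
  cases h <;> simp_all [gateType, Gate.pos]

theorem Feeds.pos_prefix {g' g : Gate X Q} (h : Feeds A T g' g) : g.pos <+: g'.pos := by
  rcases h.pos_eq_or with h | ⟨-, b, h⟩ <;> simp [h]

theorem IsGate.subt_isSome {g : Gate X Q} (h : IsGate A T g) : (T.subt g.pos).isSome := by
  cases g with
  | state => exact h
  | var => obtain ⟨l, hp, -⟩ := h; simp [Gate.pos, hp]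
  | times => obtain ⟨l, t₁, t₂, hp, -⟩ := h; simp [Gate.pos, hp]

theorem isGate_state (A : TVA L X Q) (hp : T.subt p = some t) (q : Q) :
    IsGate A T (.state p q) := by
  simp [IsGate, hp]

theorem reachesOne_or_reachesEmpty (hA : Homogenized A) (hp : T.subt p = some t)
    (h : ReachAbs A ν t p q) :
    ReachesOne A T p q ∨ ReachesEmpty A T p q ∧ assignBelow T p ν = ∅ := by
  by_cases hq : OneState A q
  · exact .inl ⟨⟨t, ν, hp, h⟩, hq⟩
  · have he := (hA.assignBelow_eq_empty_iff hp h).2 ((hA q).1.resolve_right hq)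
    exact .inr ⟨⟨t, hp, (reachAbs_iff_of_assignBelow_eq_empty hp he).1 h⟩, he⟩

theorem reachesOne_or_reachesEmpty_children (hA : Homogenized A) {l : L} {t₁ t₂ : BTree L}
    {q₁ q₂ : Q} (hp : T.subt p = some (.node l t₁ t₂)) (h₁ : ReachAbs A ν t₁ (p ++ [false]) q₁)
    (h₂ : ReachAbs A ν t₂ (p ++ [true]) q₂) (htr : A.trans l q₁ q₂ q) (hq : OneState A q) :
    ReachesOne A T (p ++ [false]) q₁ ∧ ReachesOne A T (p ++ [true]) q₂ ∨
      ReachesOne A T (p ++ [false]) q₁ ∧ ReachesEmpty A T (p ++ [true]) q₂ ∧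
        assignBelow T (p ++ [true]) ν = ∅ ∨
      ReachesEmpty A T (p ++ [false]) q₁ ∧ assignBelow T (p ++ [false]) ν = ∅ ∧
        ReachesOne A T (p ++ [true]) q₂ := by
  rcases reachesOne_or_reachesEmpty hA (BTree.subt_append_false hp) h₁ with o₁ | ⟨e₁, a₁⟩ <;>
    rcases reachesOne_or_reachesEmpty hA (BTree.subt_append_true hp) h₂ with o₂ | ⟨e₂, a₂⟩
  · exact .inl ⟨o₁, o₂⟩
  · exact .inr (.inl ⟨o₁, e₂, a₂⟩)
  · exact .inr (.inr ⟨e₁, a₁, o₂⟩)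
  · have he : assignBelow T p ν = ∅ := by rw [assignBelow_node hp, a₁, a₂, Set.union_empty]
    exact absurd ((hA.assignBelow_eq_empty_iff hp (.node h₁ h₂ htr)).1 he)
      ((hA.oneState_iff_not_zeroState q).1 hq)

theorem exists_feeds (hA : Homogenized A) (h : ReachesOne A T p q) :
    ∃ g, IsGate A T g ∧ Feeds A T g (.state p q) := by
  obtain ⟨⟨t, ν, hp, hr⟩, hq⟩ := id h
  cases hr with
  | @leaf l _ _ hi =>
    exact ⟨.var p (ν p), ⟨l, hp, hA.init_nonempty hp hi hq, q, hi⟩, .var hp hi h⟩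
  | node h₁ h₂ htr =>
    rcases reachesOne_or_reachesEmpty_children hA hp h₁ h₂ htr hq with
      ⟨o₁, o₂⟩ | ⟨o₁, e₂, -⟩ | ⟨e₁, -, o₂⟩
    · exact ⟨.times p _ _, ⟨_, _, _, hp, o₁, o₂, q, htr⟩, .times hp htr h⟩
    · exact ⟨_, isGate_state A (BTree.subt_append_false hp) _, .left hp htr h o₁ e₂⟩
    · exact ⟨_, isGate_state A (BTree.subt_append_true hp) _, .right hp htr h e₁ o₂⟩

theorem eq_of_label_eq {g g' : Gate X Q} (hg : IsGate A T g) (ht : gateType A T g = .var)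
    (ht' : gateType A T g' = .var) (hl : label g = label g') : g = g' := by
  obtain ⟨p, S, rfl⟩ := gateType_eq_var_iff.1 ht
  obtain ⟨p', S', rfl⟩ := gateType_eq_var_iff.1 ht'
  obtain ⟨_, -, ⟨z, hz⟩, -⟩ := hg
  obtain ⟨rfl, hp⟩ := (Set.prod_eq_prod_iff_of_nonempty (t := {p}) ⟨(z, p), hz, rfl⟩).1 hl
  rw [Set.singleton_eq_singleton_iff.1 hp]

variable (A T) in
noncomputable def circuit (hA : Homogenized A) : SetCircuit (X × BPos) (ValidGate A T) where
  gtype g := gateType A T g.1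
  wire g' g := Feeds A T g'.1 g.1
  varLabel g := label g.1
  varLabel_inj g g' ht ht' hl := Subtype.ext (eq_of_label_eq g.2 ht ht' hl)
  source_no_input := by
    intro g hg g' hw
    rcases hw.gateType_target with h | h <;> rcases hg with h' | h' | h' <;>
      exact absurd (h.symm.trans h') (by simp)
  const_no_output := by
    intro g hg g' hw
    rcases hw.gateType_source with h | h | h <;> rcases hg with h' | h' <;>
      exact absurd (h.symm.trans h') (by simp)
  times_two := by
    rintro ⟨g, hg⟩ ht
    obtain ⟨p, q₁, q₂, rfl⟩ := gateType_eq_times_iff.1 ht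
    obtain ⟨l, t₁, t₂, hp, o₁, o₂, -⟩ := hg
    refine ⟨⟨_, isGate_state A (BTree.subt_append_false hp) q₁⟩,
      ⟨_, isGate_state A (BTree.subt_append_true hp) q₂⟩,
      fun h => by simpa [Gate.pos] using congrArg (·.1.pos) h, .timesLeft o₁,
      .timesRight o₂, ?_⟩
    rintro ⟨g', hg'⟩ hw
    cases hw <;> simp
  cup_one := by
    rintro ⟨g, hg⟩ hc
    obtain ⟨p, q, rfl, h⟩ := gateType_eq_cup_iff.1 hc
    obtain ⟨g', hg', hw⟩ := exists_feeds hA h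
    exact ⟨⟨g', hg'⟩, hw⟩

variable (A T) in
noncomputable def dnnf (hA : Homogenized A) : StructuredDNNF (X × BPos) (ValidGate A T) where
  toSetCircuit := circuit A T hA
  vtree := vtreeOf X T []
  σ g := g.1.pos
  σ_valid g := by
    obtain ⟨t, ht⟩ := Option.isSome_iff_exists.1 g.2.subt_isSome
    simp [vtreeOf_sub X [] ht]
  var_leaf := by
    rintro ⟨g, hg⟩ ht
    obtain ⟨p, S, rfl⟩ := gateType_eq_var_iff.1 ht
    obtain ⟨l, hp, -⟩ := hg
    refine ⟨{z | z.2 = p}, by simp [Gate.pos, vtreeOf_sub X [] hp, vtreeOf], ?_⟩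
    rintro z ⟨-, hz⟩
    exact hz
  var_nonempty := by
    rintro ⟨g, hg⟩ ht
    obtain ⟨p, S, rfl⟩ := gateType_eq_var_iff.1 ht
    obtain ⟨_, -, ⟨z, hz⟩, -⟩ := hg
    exact ⟨(z, p), hz, rfl⟩
  wire_struct _ _ hw := hw.pos_eq_or
  times_children := by
    rintro ⟨g, hg⟩ ht
    obtain ⟨p, q₁, q₂, rfl⟩ := gateType_eq_times_iff.1 ht
    obtain ⟨l, t₁, t₂, hp, o₁, o₂, -⟩ := hg
    exact ⟨⟨⟨_, isGate_state A (BTree.subt_append_false hp) q₁⟩, .timesLeft o₁, rfl⟩,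
      ⟨⟨_, isGate_state A (BTree.subt_append_true hp) q₂⟩, .timesRight o₂, rfl⟩⟩
  leaves_disjoint p₁ p₂ vs₁ vs₂ h₁ h₂ hne := by
    rw [vtreeOf_sub_eq_leaf X h₁, vtreeOf_sub_eq_leaf X h₂, Set.disjoint_left]
    intro z hz₁ hz₂
    exact hne (by simpa using hz₁.symm.trans hz₂)

section Correctness

variable {hA : Homogenized A}

theorem ReachesEmpty.reachAbs (he : ReachesEmpty A T p q) (hp : T.subt p = some t)
    (hE : assignBelow T p ν = ∅) : ReachAbs A ν t p q := by
  obtain ⟨t', ht', hr⟩ := he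
  obtain rfl : t' = t := Option.some_injective _ (ht'.symm.trans hp)
  exact (reachAbs_iff_of_assignBelow_eq_empty hp hE).2 hr

theorem captures_subset_varsBelow {g : ValidGate A T} {S : Set (X × BPos)}
    (h : Captures (circuit A T hA) g S) : S ⊆ varsBelow X g.1.pos := by
  refine h.subset_of_wire (U := fun g => varsBelow X g.1.pos) (fun ⟨g, _⟩ ht => ?_)
    fun _ _ (hw : Feeds A T _ _) z (hz : _ <+: z.2) =>
      show _ <+: z.2 from hw.pos_prefix.trans hz
  obtain ⟨p, S, rfl⟩ := gateType_eq_var_iff.1 ht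
  rintro z ⟨-, hz⟩
  exact (show z.2 = p from hz) ▸ List.prefix_refl p

theorem captures_times_iff {l : L} {t₁ t₂ : BTree L} {q₁ q₂ : Q}
    (hp : T.subt p = some (.node l t₁ t₂)) (hg : IsGate A T (.times p q₁ q₂))
    {S : Set (X × BPos)} :
    Captures (circuit A T hA) ⟨.times p q₁ q₂, hg⟩ S ↔ ∃ S₁ S₂,
      Captures (circuit A T hA) ⟨.state (p ++ [false]) q₁,
        isGate_state A (BTree.subt_append_false hp) q₁⟩ S₁ ∧
      Captures (circuit A T hA) ⟨.state (p ++ [true]) q₂,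
        isGate_state A (BTree.subt_append_true hp) q₂⟩ S₂ ∧ S = S₁ ∪ S₂ := by
  rw [captures_iff_of_times rfl]
  constructor
  · rintro ⟨⟨g₁, _⟩, ⟨g₂, _⟩, S₁, S₂, hw₁, hw₂, hne, h₁, h₂, rfl⟩
    cases hw₁ <;> cases hw₂
    · exact absurd rfl hne
    · exact ⟨S₁, S₂, h₁, h₂, rfl⟩
    · exact ⟨S₂, S₁, h₂, h₁, Set.union_comm _ _⟩
    · exact absurd rfl hne
  · rintro ⟨S₁, S₂, h₁, h₂, rfl⟩
    obtain ⟨-, -, -, -, o₁, o₂, -⟩ := hg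
    exact ⟨⟨_, isGate_state A (BTree.subt_append_false hp) q₁⟩,
      ⟨_, isGate_state A (BTree.subt_append_true hp) q₂⟩, S₁, S₂, .timesLeft o₁, .timesRight o₂,
      fun h => by simpa [Gate.pos] using congrArg (·.1.pos) h, h₁, h₂, rfl⟩

theorem captures_state_iff_of_not_reachesOne (hp : T.subt p = some t)
    (h : ¬ ReachesOne A T p q) :
    Captures (circuit A T hA) ⟨.state p q, isGate_state A hp q⟩ (assignBelow T p ν) ↔
      ReachAbs A ν t p q := by
  by_cases he : ReachesEmpty A T p q
  · rw [captures_iff_of_top (by simp [circuit, gateType, h, he])]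
    refine ⟨he.reachAbs hp, fun hr => ?_⟩
    exact ((reachesOne_or_reachesEmpty hA hp hr).resolve_left h).2
  · refine iff_of_false (not_captures_of_bot (by simp [circuit, gateType, h, he])) fun hr => ?_
    rcases reachesOne_or_reachesEmpty hA hp hr with h' | ⟨h', -⟩ <;> contradiction

theorem captures_state_iff_of_leaf {l : L} (hp : T.subt p = some (.leaf l))
    (h : ReachesOne A T p q) :
    Captures (circuit A T hA) ⟨.state p q, isGate_state A hp q⟩ (assignBelow T p ν) ↔
      ReachAbs A ν (.leaf l) p q := by
  rw [captures_iff_of_cup (gateType_state_of_reachesOne h)]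
  constructor
  · rintro ⟨⟨g, hg⟩, hw, hc⟩
    cases hw with
    | @var _ l' S _ hp' hi _ =>
      obtain rfl : l' = l := by simpa [hp] using hp'.symm
      rw [captures_iff_of_var rfl, assignBelow_leaf hp] at hc
      have hc : ν p ×ˢ {p} = S ×ˢ {p} := hc
      have hS : ν p = S := Set.ext fun z => by simpa using Set.ext_iff.1 hc (z, p)
      exact .leaf (hS ▸ hi)
    | times hp' | left hp' | right hp' => simp [hp] at hp'
  · rintro ⟨hi⟩
    refine ⟨⟨.var p (ν p), l, hp, hA.init_nonempty hp hi h.2, q, hi⟩, .var hp hi h, ?_⟩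
    rw [captures_iff_of_var rfl, assignBelow_leaf hp]
    rfl

variable (T hA) in
def StateGateCorrect (t : BTree L) (p : BPos) (ν : BPos → Set X) : Prop :=
  ∀ (hp : T.subt p = some t) (q : Q),
    Captures (circuit A T hA) ⟨.state p q, isGate_state A hp q⟩ (assignBelow T p ν) ↔
      ReachAbs A ν t p q

theorem reachAbs_of_captures_state_node {l : L} {t₁ t₂ : BTree L}
    (hp : T.subt p = some (.node l t₁ t₂)) (h : ReachesOne A T p q)
    (ih₁ : StateGateCorrect T hA t₁ (p ++ [false]) ν)
    (ih₂ : StateGateCorrect T hA t₂ (p ++ [true]) ν)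
    (hcap : Captures (circuit A T hA) ⟨.state p q, isGate_state A hp q⟩ (assignBelow T p ν)) :
    ReachAbs A ν (.node l t₁ t₂) p q := by
  have hp₁ := BTree.subt_append_false hp
  have hp₂ := BTree.subt_append_true hp
  obtain ⟨⟨g, hg⟩, hw, hc⟩ := (captures_iff_of_cup (gateType_state_of_reachesOne h)).1 hcap
  cases hw with
  | var hp' => simp [hp] at hp'
  | times hp' htr =>
    obtain ⟨rfl, rfl, rfl⟩ := by simpa [hp] using hp'.symm
    obtain ⟨S₁, S₂, h₁, h₂, hS⟩ := (captures_times_iff hp hg).1 hc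
    obtain ⟨rfl, rfl⟩ := Set.eq_and_eq_of_union_eq_union
      (disjoint_varsBelow_false_true X p) (captures_subset_varsBelow h₁)
      (captures_subset_varsBelow h₂) assignBelow_subset_varsBelow
      assignBelow_subset_varsBelow (hS.symm.trans (assignBelow_node hp))
    exact .node ((ih₁ hp₁ _).1 h₁) ((ih₂ hp₂ _).1 h₂) htr
  | left hp' htr _ _ he =>
    obtain ⟨rfl, rfl, rfl⟩ := by simpa [hp] using hp'.symm
    obtain ⟨e₂, e⟩ := assignBelow_node_of_subset_false hp (captures_subset_varsBelow hc)
    rw [e] at hc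
    exact .node ((ih₁ hp₁ _).1 hc) (he.reachAbs hp₂ e₂) htr
  | right hp' htr _ he =>
    obtain ⟨rfl, rfl, rfl⟩ := by simpa [hp] using hp'.symm
    obtain ⟨e₁, e⟩ := assignBelow_node_of_subset_true hp (captures_subset_varsBelow hc)
    rw [e] at hc
    exact .node (he.reachAbs hp₁ e₁) ((ih₂ hp₂ _).1 hc) htr

theorem captures_state_of_reachAbs_node {l : L} {t₁ t₂ : BTree L}
    (hp : T.subt p = some (.node l t₁ t₂)) (h : ReachesOne A T p q)
    (ih₁ : StateGateCorrect T hA t₁ (p ++ [false]) ν)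
    (ih₂ : StateGateCorrect T hA t₂ (p ++ [true]) ν) (hr : ReachAbs A ν (.node l t₁ t₂) p q) :
    Captures (circuit A T hA) ⟨.state p q, isGate_state A hp q⟩ (assignBelow T p ν) := by
  have hp₁ := BTree.subt_append_false hp
  have hp₂ := BTree.subt_append_true hp
  rw [captures_iff_of_cup (gateType_state_of_reachesOne h)]
  cases hr with | @node _ _ _ _ q₁ q₂ _ h₁ h₂ htr => ?_
  rcases reachesOne_or_reachesEmpty_children hA hp h₁ h₂ htr h.2 with
    ⟨o₁, o₂⟩ | ⟨o₁, e₂, a₂⟩ | ⟨e₁, a₁, o₂⟩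
  · refine ⟨⟨.times p _ _, _, _, _, hp, o₁, o₂, q, htr⟩, .times hp htr h, ?_⟩
    exact (captures_times_iff hp _).2
      ⟨_, _, (ih₁ hp₁ _).2 h₁, (ih₂ hp₂ _).2 h₂, assignBelow_node hp⟩
  · refine ⟨⟨_, isGate_state A hp₁ q₁⟩, .left hp htr h o₁ e₂, ?_⟩
    rw [assignBelow_node hp, a₂, Set.union_empty]
    exact (ih₁ hp₁ _).2 h₁
  · refine ⟨⟨_, isGate_state A hp₂ q₂⟩, .right hp htr h e₁ o₂, ?_⟩
    rw [assignBelow_node hp, a₁, Set.empty_union]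
    exact (ih₂ hp₂ _).2 h₂

theorem stateGateCorrect (t : BTree L) (p : BPos) (ν : BPos → Set X) :
    StateGateCorrect T hA t p ν := by
  induction t generalizing p with
  | leaf =>
    intro hp q
    by_cases h : ReachesOne A T p q
    · exact captures_state_iff_of_leaf hp h
    · exact captures_state_iff_of_not_reachesOne hp h
  | node l t₁ t₂ ih₁ ih₂ =>
    intro hp q
    by_cases h : ReachesOne A T p q
    · exact ⟨reachAbs_of_captures_state_node hp h (ih₁ _) (ih₂ _),
        captures_state_of_reachAbs_node hp h (ih₁ _) (ih₂ _)⟩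
    · exact captures_state_iff_of_not_reachesOne hp h

variable (A T) in
/-- The gate `γ(p, q)`; positions outside `T` are never queried and get the gates of the root. -/
def stateGate (p : BPos) (q : Q) : ValidGate A T :=
  if hp : (T.subt p).isSome then ⟨.state p q, hp⟩
  else ⟨.state [] q, by simp [IsGate, BTree.subt]⟩

theorem stateGate_of_subt (hp : T.subt p = some t) :
    stateGate A T p q = ⟨.state p q, isGate_state A hp q⟩ := by
  simp [stateGate, hp]

end Correctness

section Bounds

def Gate.level : Gate X Q → ℕ
  | state p _ => 3 * p.length
  | times p _ _ => 3 * p.length + 1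
  | var p _ => 3 * p.length + 2

theorem Feeds.level_lt {g' g : Gate X Q} (h : Feeds A T g' g) : g.level < g'.level := by
  cases h <;> simp [Gate.level] <;> omega

theorem IsGate.level_le {g : Gate X Q} (h : IsGate A T g) : g.level ≤ 3 * T.height + 2 := by
  have := BTree.length_le_height h.subt_isSome
  cases g <;> simp only [Gate.level, Gate.pos] at this ⊢ <;> omega

theorem depth_le {hA : Homogenized A} {g g' : ValidGate A T} {n : ℕ}
    (h : WirePath (circuit A T hA) g g' n) : n ≤ 3 * (T.height + 1) := by
  have := h.add_le (f := fun g => g.1.level) fun _ _ hw => Feeds.level_lt hw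
  have := g.2.level_le
  omega

theorem ncard_cup_le [Finite Q] (vp : BPos) :
    {g : ValidGate A T | gateType A T g.1 = .cup ∧ g.1.pos = vp}.ncard ≤ Nat.card Q := by
  rw [← Set.ncard_image_of_injective _ Subtype.val_injective,
    ← Set.ncard_range_of_injective (f := Gate.state (X := X) vp) fun _ _ h => by cases h; rfl]
  refine Set.ncard_le_ncard ?_ (Set.finite_range _)
  rintro _ ⟨g, ⟨hc, rfl⟩, rfl⟩
  obtain ⟨p, q, hg, -⟩ := gateType_eq_cup_iff.1 hc
  exact ⟨q, by simp [hg, Gate.pos]⟩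

variable (A T) in
def gateCover : Set (Gate X Q) :=
  (fun x : BPos × Q => Gate.state x.1 x.2) '' (↑T.positions ×ˢ Set.univ) ∪
    (fun x : BPos × (L × Set X × Q) => Gate.var x.1 x.2.2.1) ''
      (↑T.positions ×ˢ {t | A.init t.1 t.2.1 t.2.2}) ∪
    (fun x : BPos × (L × Q × Q × Q) => Gate.times x.1 x.2.2.1 x.2.2.2.1) ''
      (↑T.positions ×ˢ {t | A.trans t.1 t.2.1 t.2.2.1 t.2.2.2})

theorem isGate_subset_gateCover : {g | IsGate A T g} ⊆ gateCover A T := by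
  rintro (⟨p, q⟩ | ⟨p, S⟩ | ⟨p, q₁, q₂⟩) hg
  · exact .inl (.inl ⟨(p, q), ⟨BTree.mem_positions.2 hg, trivial⟩, rfl⟩)
  · obtain ⟨l, hp, -, q, hi⟩ := hg
    exact .inl (.inr ⟨(p, l, S, q), ⟨BTree.mem_positions.2 (by simp [hp]), hi⟩, rfl⟩)
  · obtain ⟨l, t₁, t₂, hp, -, -, q, htr⟩ := hg
    exact .inr ⟨(p, l, q₁, q₂, q), ⟨BTree.mem_positions.2 (by simp [hp]), htr⟩, rfl⟩

theorem finite_gateCover [Finite L] [Finite X] [Finite Q] : (gateCover A T).Finite := by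
  have hP := T.positions.finite_toSet
  exact ((hP.prod (Set.toFinite _)).image _ |>.union ((hP.prod (Set.toFinite _)).image _)).union
    ((hP.prod (Set.toFinite _)).image _)

theorem ncard_isGate_le [Finite L] [Finite X] [Finite Q] :
    {g | IsGate A T g}.ncard ≤ T.size * (Nat.card Q +
      {t : L × Set X × Q | A.init t.1 t.2.1 t.2.2}.ncard +
      {t : L × Q × Q × Q | A.trans t.1 t.2.1 t.2.2.1 t.2.2.2}.ncard) := by
  have hP := T.positions.finite_toSet
  refine (Set.ncard_le_ncard isGate_subset_gateCover finite_gateCover).trans ?_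
  refine ((Set.ncard_union_le _ _).trans
    (Nat.add_le_add_right (Set.ncard_union_le _ _) _)).trans ?_
  rw [mul_add, mul_add]
  gcongr <;> refine (Set.ncard_image_le (hP.prod (Set.toFinite _))).trans_eq ?_ <;>
    simp [Set.ncard_prod, BTree.card_positions]

end Bounds

end AssignmentCircuit

open AssignmentCircuit in
/-- for every binary tree `T` and homogenized TVA `A` one can build an
assignment circuit of `A` on `T`: a complete structured DNNF `C` (structured by the
v-tree isomorphic to `T`) of width at most `|Q|`, depth `O(height T)` and size
`O(|T| · |A|)`, with a gate `γ(n, q)` for each node `n` and state `q` capturing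
exactly the assignments of the valuations `ν` for which some run of `A` on the
subtree rooted at `n` under `ν` maps `n` to `q`. -/
theorem stmt8 {L X Q : Type} [Fintype L] [Fintype X] [Fintype Q]
    (A : TVA L X Q) (hA : Homogenized A) (T : BTree L) :
    ∃ (G : Type) (_ : Fintype G) (D : StructuredDNNF (X × BPos) G) (γ : BPos → Q → G),
      D.vtree = vtreeOf X T [] ∧
      (∀ (p : BPos) (t : BTree L), T.subt p = some t → ∀ (q : Q) (ν : BPos → Set X),
        Captures D.toSetCircuit (γ p q) (assignBelow T p ν) ↔ ReachAbs A ν t p q) ∧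
      (∀ vp : BPos,
        {g : G | D.gtype g = GateType.cup ∧ D.σ g = vp}.ncard ≤ Fintype.card Q) ∧
      (∀ (g g' : G) (n : ℕ), WirePath D.toSetCircuit g g' n → n ≤ 3 * (T.height + 1)) ∧
      Fintype.card G ≤ 4 * T.size * (Fintype.card Q +
        {t : L × Set X × Q | A.init t.1 t.2.1 t.2.2}.ncard +
        {t : L × Q × Q × Q | A.trans t.1 t.2.1 t.2.2.1 t.2.2.2}.ncard) := by
  refine ⟨ValidGate A T, (finite_gateCover.subset isGate_subset_gateCover).fintype,
    dnnf A T hA, stateGate A T, rfl, ?_, ?_, ?_, ?_⟩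
  · intro p t hp q ν
    rw [stateGate_of_subt hp]
    exact stateGateCorrect (hA := hA) t p ν hp q
  · intro vp
    exact Nat.card_eq_fintype_card (α := Q) ▸ ncard_cup_le vp
  · intro g g' n h
    exact depth_le (hA := hA) h
  · rw [Fintype.card_eq_nat_card, Nat.card_coe_set_eq, Fintype.card_eq_nat_card]
    refine ncard_isGate_le.trans ?_
    rw [mul_assoc]
    exact Nat.le_mul_of_pos_left _ (by norm_num)
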